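/- With the 3SAT-to-PPCFG construction, the following are equivalent: (1) the 3SAT instance (X, C) is satisfiable; (2) there exists a parameter setting p of Γ such that {c_i : c_i ∈ C} ⊆ L(Γ_p). -/

import Mathlib

/-- One rewriting step using some rule from the rule set `R`. -/
def CFProduces {T N : Type*} (R : Set (ContextFreeRule T N))
    (u v : List (Symbol T N)) : Prop :=
  ∃ r ∈ R, r.Rewrites u v

/-- Derivation: reflexive-transitive closure of single rewriting steps. -/
def CFDerives {T N : Type*} (R : Set (ContextFreeRule T N)) :
    List (Symbol T N) → List (Symbol T N) → Prop :=
  Relation.ReflTransGen (CFProduces R)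

/-- The language generated from start symbol `S` by the rules `R`. -/
def CFLanguage {T N : Type*} (R : Set (ContextFreeRule T N)) (S : N) :
    Set (List T) :=
  { w | CFDerives R [Symbol.nonterminal S] (w.map Symbol.terminal) }

/-- Nonterminals of the 3SAT grammar: `START`, the variable symbols `x i`, and
the truth-marked variable symbols `x_{i,T}` and `x_{i,F}`. -/
inductive SatNT (n : ℕ)
  | start
  | x (i : Fin n)
  | xT (i : Fin n)
  | xF (i : Fin n)

/-- The PPCFG `Γ_p` built from a 3SAT instance with `n` variables and `m`
clauses, where `pos c j` (resp. `neg c j`) means the literal `x j` (resp.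
`¬ x j`) occurs in clause `c`.  Terminals are the clause symbols.  Fixed
productions: `START → x 1 ⋯ x n`, `x i → ε` for all `i`, `x_{j,T} → c` whenever
`x j ∈ c`, and `x_{j,F} → c` whenever `¬ x j ∈ c`.  The parameter setting
`p : Fin n → Bool` chooses, in each group `(x i → x_{i,T}, x i → x_{i,F})`,
the first production iff `p i = true`. -/
def satRules {n m : ℕ} (pos neg : Fin m → Fin n → Bool) (p : Fin n → Bool) :
    Set (ContextFreeRule (Fin m) (SatNT n)) :=
  {⟨SatNT.start, List.ofFn fun i : Fin n => Symbol.nonterminal (SatNT.x i)⟩} ∪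
  { r | ∃ i : Fin n, r = ⟨SatNT.x i, []⟩ } ∪
  { r | ∃ i : Fin n,
      r = ⟨SatNT.x i, [Symbol.nonterminal (if p i then SatNT.xT i else SatNT.xF i)]⟩ } ∪
  { r | ∃ c : Fin m, ∃ j : Fin n, pos c j = true ∧ r = ⟨SatNT.xT j, [Symbol.terminal c]⟩ } ∪
  { r | ∃ c : Fin m, ∃ j : Fin n, neg c j = true ∧ r = ⟨SatNT.xF j, [Symbol.terminal c]⟩ }

/-- The 3SAT instance is satisfiable: some truth assignment makes every clause true. -/
def SatSatisfiable {n m : ℕ} (pos neg : Fin m → Fin n → Bool) : Prop :=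
  ∃ a : Fin n → Bool, ∀ c : Fin m, ∃ j : Fin n,
    (pos c j = true ∧ a j = true) ∨ (neg c j = true ∧ a j = false)

/-- Each clause contains at most three literals (it is a 3SAT instance). -/
def ThreeBounded {n m : ℕ} (pos neg : Fin m → Fin n → Bool) : Prop :=
  ∀ c : Fin m, (Finset.univ.filter fun j : Fin n => pos c j = true ∨ neg c j = true).card ≤ 3

/-! Under a setting `p`, a derivation `START ⇒ x_1 ⋯ x_n ⇒ x_j ⇒ x_{j,T/F} ⇒ c` exists
whenever some literal on `x_j` in `c` is made true by `p` (all other `x_i` are erased). Conversely,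
every symbol occurring in a derivation from `START` under `p` is "satisfied" by `p`, reading
`x_{i,T}` as `p i = true`, `x_{i,F}` as `p i = false` and a clause symbol `c` as `p ⊨ c`;
this invariant is preserved by every rule, so a derived clause symbol is satisfied by `p`. -/

namespace CFDerives

variable {T N : Type*} {R : Set (ContextFreeRule T N)} {u v w : List (Symbol T N)}

theorem trans (huv : CFDerives R u v) (hvw : CFDerives R v w) : CFDerives R u w :=
  Relation.ReflTransGen.trans huv hvw

theorem rule {r : ContextFreeRule T N} (hr : r ∈ R) :
    CFDerives R [Symbol.nonterminal r.input] r.output :=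
  .single ⟨r, hr, ContextFreeRule.Rewrites.input_output⟩

theorem append_left (h : CFDerives R u v) (w : List (Symbol T N)) :
    CFDerives R (w ++ u) (w ++ v) := by
  induction h with
  | refl => exact .refl
  | tail _ hstep ih =>
    obtain ⟨r, hr, hrw⟩ := hstep
    exact ih.tail ⟨r, hr, hrw.append_left w⟩

theorem append_right (h : CFDerives R u v) (w : List (Symbol T N)) :
    CFDerives R (u ++ w) (v ++ w) := by
  induction h with
  | refl => exact .refl
  | tail _ hstep ih =>
    obtain ⟨r, hr, hrw⟩ := hstep
    exact ih.tail ⟨r, hr, hrw.append_right w⟩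

theorem append {u' v' : List (Symbol T N)} (h : CFDerives R u v) (h' : CFDerives R u' v') :
    CFDerives R (u ++ u') (v ++ v') :=
  (h.append_right u').trans (h'.append_left v)

theorem nil_of_forall_mem (herase : ∀ s ∈ u, CFDerives R [s] []) : CFDerives R u [] := by
  induction u with
  | nil => exact .refl
  | cons s u ih =>
    exact (herase s List.mem_cons_self).append
      (ih fun t ht => herase t (List.mem_cons_of_mem s ht))

theorem singleton_of_mem (herase : ∀ t ∈ u, CFDerives R [t] []) {s : Symbol T N} (hs : s ∈ u) :
    CFDerives R u [s] := by
  obtain ⟨u₁, u₂, rfl⟩ := List.append_of_mem hs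
  have h₁ := nil_of_forall_mem fun t ht => herase t (List.mem_append_left _ ht)
  have h₂ := nil_of_forall_mem fun t ht => herase t (List.mem_append_right _ (.tail s ht))
  have hs' : CFDerives R [s] [s] := .refl
  simpa using h₁.append (hs'.append h₂)

theorem forall_mem {P : Symbol T N → Prop}
    (hR : ∀ r ∈ R, P (Symbol.nonterminal r.input) → ∀ s ∈ r.output, P s)
    (h : CFDerives R u v) (hu : ∀ s ∈ u, P s) : ∀ s ∈ v, P s := by
  induction h with
  | refl => exact hu
  | tail _ hstep ih =>
    obtain ⟨r, hr, hrw⟩ := hstep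
    obtain ⟨x, y, rfl, rfl⟩ := hrw.exists_parts
    simp only [List.mem_append, List.mem_cons] at ih ⊢
    rintro s ((hx | hout) | hy)
    · exact ih s (.inl (.inl hx))
    · exact hR r hr (ih _ (.inl (.inr (.inl rfl)))) s hout
    · exact ih s (.inr hy)

end CFDerives

section SatGrammar

variable {n m : ℕ} {pos neg : Fin m → Fin n → Bool} {p : Fin n → Bool}

def ClauseSatisfied (pos neg : Fin m → Fin n → Bool) (a : Fin n → Bool) (c : Fin m) : Prop :=
  ∃ j : Fin n, (pos c j = true ∧ a j = true) ∨ (neg c j = true ∧ a j = false)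

theorem start_mem_satRules :
    (⟨SatNT.start, List.ofFn fun i : Fin n => Symbol.nonterminal (SatNT.x i)⟩ :
      ContextFreeRule (Fin m) (SatNT n)) ∈ satRules pos neg p :=
  .inl (.inl (.inl (.inl rfl)))

theorem erase_mem_satRules (i : Fin n) :
    (⟨SatNT.x i, []⟩ : ContextFreeRule (Fin m) (SatNT n)) ∈ satRules pos neg p :=
  .inl (.inl (.inl (.inr ⟨i, rfl⟩)))

theorem choice_mem_satRules (i : Fin n) :
    (⟨SatNT.x i, [Symbol.nonterminal (if p i then SatNT.xT i else SatNT.xF i)]⟩ :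
      ContextFreeRule (Fin m) (SatNT n)) ∈ satRules pos neg p :=
  .inl (.inl (.inr ⟨i, rfl⟩))

theorem posLiteral_mem_satRules {c : Fin m} {j : Fin n} (h : pos c j = true) :
    (⟨SatNT.xT j, [Symbol.terminal c]⟩ : ContextFreeRule (Fin m) (SatNT n)) ∈
      satRules pos neg p :=
  .inl (.inr ⟨c, j, h, rfl⟩)

theorem negLiteral_mem_satRules {c : Fin m} {j : Fin n} (h : neg c j = true) :
    (⟨SatNT.xF j, [Symbol.terminal c]⟩ : ContextFreeRule (Fin m) (SatNT n)) ∈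
      satRules pos neg p :=
  .inr ⟨c, j, h, rfl⟩

theorem derives_variable_clause {c : Fin m} {j : Fin n}
    (hj : (pos c j = true ∧ p j = true) ∨ (neg c j = true ∧ p j = false)) :
    CFDerives (satRules pos neg p) [Symbol.nonterminal (SatNT.x j)] [Symbol.terminal c] := by
  have hchoice := CFDerives.rule (choice_mem_satRules (pos := pos) (neg := neg) (p := p) j)
  rcases hj with ⟨hpos, hpj⟩ | ⟨hneg, hpj⟩
  · simp only [hpj, if_true] at hchoice
    exact hchoice.trans (CFDerives.rule (posLiteral_mem_satRules hpos))
  · simp only [hpj, Bool.false_eq_true, if_false] at hchoice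
    exact hchoice.trans (CFDerives.rule (negLiteral_mem_satRules hneg))

theorem mem_language_of_clauseSatisfied {c : Fin m} (hc : ClauseSatisfied pos neg p c) :
    [c] ∈ CFLanguage (satRules pos neg p) SatNT.start := by
  obtain ⟨j, hj⟩ := hc
  have hvars : ∀ s ∈ List.ofFn fun i : Fin n => Symbol.nonterminal (SatNT.x i),
      CFDerives (satRules pos neg p) [s] ([] : List (Symbol (Fin m) (SatNT n))) := by
    simp only [List.mem_ofFn]
    rintro _ ⟨i, rfl⟩
    exact CFDerives.rule (erase_mem_satRules i)
  exact (CFDerives.rule start_mem_satRules).trans <|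
    (CFDerives.singleton_of_mem hvars (List.mem_ofFn.mpr ⟨j, rfl⟩)).trans <|
    derives_variable_clause hj

def SymbolSatisfied (pos neg : Fin m → Fin n → Bool) (p : Fin n → Bool) :
    Symbol (Fin m) (SatNT n) → Prop
  | .terminal c => ClauseSatisfied pos neg p c
  | .nonterminal (SatNT.xT i) => p i = true
  | .nonterminal (SatNT.xF i) => p i = false
  | .nonterminal _ => True

theorem symbolSatisfied_output {r : ContextFreeRule (Fin m) (SatNT n)}
    (hr : r ∈ satRules pos neg p) (hin : SymbolSatisfied pos neg p (.nonterminal r.input)) :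
    ∀ s ∈ r.output, SymbolSatisfied pos neg p s := by
  rcases hr with ((((rfl | ⟨i, rfl⟩) | ⟨i, rfl⟩) | ⟨c, j, hpos, rfl⟩) | ⟨c, j, hneg, rfl⟩)
  · simp only [List.mem_ofFn]
    rintro _ ⟨i, rfl⟩
    trivial
  · simp
  · cases hpi : p i <;> simp [SymbolSatisfied, hpi]
  · simpa using ⟨j, .inl ⟨hpos, hin⟩⟩
  · simpa using ⟨j, .inr ⟨hneg, hin⟩⟩

theorem clauseSatisfied_of_mem_language {c : Fin m}
    (hc : [c] ∈ CFLanguage (satRules pos neg p) SatNT.start) : ClauseSatisfied pos neg p c :=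
  CFDerives.forall_mem (fun _ hr => symbolSatisfied_output hr) hc
    (by simp [SymbolSatisfied]) (.terminal c) (by simp)

end SatGrammar

theorem sat_iff_ppcfg_setting_general {n m : ℕ} (pos neg : Fin m → Fin n → Bool) :
    SatSatisfiable pos neg ↔
      ∃ p : Fin n → Bool, ∀ c : Fin m,
        [c] ∈ CFLanguage (satRules pos neg p) SatNT.start := by
  constructor
  · rintro ⟨a, ha⟩
    exact ⟨a, fun c => mem_language_of_clauseSatisfied (ha c)⟩
  · rintro ⟨p, hp⟩
    exact ⟨p, fun c => clauseSatisfied_of_mem_language (hp c)⟩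

/-- The 3SAT instance is satisfiable if and only if there exists a parameter
setting `p` of `Γ` such that every (length-1) clause-symbol string belongs to
`L(Γ_p)`. -/
theorem sat_iff_ppcfg_setting {n m : ℕ} (pos neg : Fin m → Fin n → Bool)
    (h3 : ThreeBounded pos neg) :
    SatSatisfiable pos neg ↔
      ∃ p : Fin n → Bool, ∀ c : Fin m,
        [c] ∈ CFLanguage (satRules pos neg p) SatNT.start :=
  sat_iff_ppcfg_setting_general pos neg
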